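/- The number of 2m-step closed walks at the origin in the restricted two-dimensional lattice L{x ≥ y ≥ -x} equals C_m², the square of the m-th Catalan number; odd-step closed walk counts are 0. -/

import Mathlib

/-!
The rotation `(x, y) ↦ (x - y, x + y)` embeds the wedge `|y| ≤ x` into `ℕ × ℕ` and turns
every lattice step into a diagonal step `(±1, ±1)`; since the two coordinates of a diagonal step
move independently, a closed walk of length `n` at the origin of the wedge is a pair of closed walks
of length `n` at `0` on the half-line `ℕ`. Reading `+1` as `U` and `-1` as `D`, those are the
Dyck words of length `n`: there are `C_m` of length `2m` and none of odd length.
-/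

/-- The one-dimensional integer lattice: `x ∼ y` iff `|x - y| = 1`. -/
def latZ : SimpleGraph ℤ where
  Adj x y := |x - y| = 1
  symm := ⟨by intro x y h; rwa [abs_sub_comm]⟩
  loopless := ⟨by intro x h; simp at h⟩

/-- The half-line graph on `ℕ = {0,1,2,...}`: `x ∼ y` iff `|x - y| = 1`. -/
def latN : SimpleGraph ℕ where
  Adj x y := |(x : ℤ) - y| = 1
  symm := ⟨by intro x y h; rwa [abs_sub_comm]⟩
  loopless := ⟨by intro x h; simp at h⟩

/-- The number of `m`-step closed walks at `o` in `G`. -/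
noncomputable def walkCount {V : Type*} (G : SimpleGraph V) (o : V) (m : ℕ) : ℕ :=
  Nat.card {w : G.Walk o o // w.length = m}

open List

lemma List.isChain_and_iff {α : Type*} {R S : α → α → Prop} {l : List α} :
    l.IsChain (fun a b => R a b ∧ S a b) ↔ l.IsChain R ∧ l.IsChain S := by
  induction l using List.twoStepInduction with
  | nil => simp
  | singleton => simp
  | cons_cons a b l _ ih => simp only [List.isChain_cons_cons, ih]; tauto

namespace SimpleGraph

variable {V W : Type*} {G : SimpleGraph V} {H : SimpleGraph W}

/-- The lists `w.support.tail` of the walks `w` of length `n` from `u` to `v`. -/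
def supportTails (G : SimpleGraph V) (u v : V) (n : ℕ) : Set (List V) :=
  {l | (u :: l).IsChain G.Adj ∧ l.getLastD u = v ∧ l.length = n}

lemma mem_supportTails {u v : V} {n : ℕ} {l : List V} :
    l ∈ G.supportTails u v n ↔ (u :: l).IsChain G.Adj ∧ l.getLastD u = v ∧ l.length = n :=
  Iff.rfl

lemma Walk.getLastD_support_tail {u v : V} (w : G.Walk u v) : w.support.tail.getLastD u = v := by
  rw [← getLast_eq_getLastD (cons_ne_nil _ _)]
  simp only [w.cons_tail_support, w.getLast_support]

def Walk.equivSupportTails (u v : V) (n : ℕ) :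
    {w : G.Walk u v // w.length = n} ≃ G.supportTails u v n where
  toFun w := ⟨w.1.support.tail, mem_supportTails.2
    ⟨by simpa only [w.1.cons_tail_support] using w.1.isChain_adj_support,
      w.1.getLastD_support_tail, by simp [w.2]⟩⟩
  invFun l :=
    have hl := mem_supportTails.1 l.2
    ⟨(Walk.ofSupport (u :: l.1) (cons_ne_nil _ _) hl.1).copy (head_cons ..)
      ((getLast_eq_getLastD _).trans hl.2.1), by
      rw [Walk.length_copy, Walk.length_ofSupport, List.length_cons, hl.2.2, Nat.add_sub_cancel]⟩
  left_inv w := Subtype.ext <| Walk.ext_support <| by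
    rw [Walk.support_copy, Walk.support_ofSupport, w.1.cons_tail_support]
  right_inv l := Subtype.ext <| by
    dsimp only
    rw [Walk.support_copy, Walk.support_ofSupport, List.tail_cons]

lemma walkCount_eq_card_supportTails (G : SimpleGraph V) (u : V) (n : ℕ) :
    walkCount G u n = Nat.card (G.supportTails u u n) :=
  Nat.card_congr (Walk.equivSupportTails u u n)

def tensorProd (G : SimpleGraph V) (H : SimpleGraph W) : SimpleGraph (V × W) where
  Adj p q := G.Adj p.1 q.1 ∧ H.Adj p.2 q.2
  symm := ⟨fun _ _ h => ⟨h.1.symm, h.2.symm⟩⟩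
  loopless := ⟨fun p h => G.loopless.irrefl p.1 h.1⟩

lemma isChain_tensorProd_iff {l : List (V × W)} :
    l.IsChain (G.tensorProd H).Adj ↔
      (l.map Prod.fst).IsChain G.Adj ∧ (l.map Prod.snd).IsChain H.Adj := by
  simp only [isChain_map]
  exact isChain_and_iff

lemma mem_supportTails_tensorProd {p q : V × W} {n : ℕ} {l : List (V × W)} :
    l ∈ (G.tensorProd H).supportTails p q n ↔
      l.map Prod.fst ∈ G.supportTails p.1 q.1 n ∧
        l.map Prod.snd ∈ H.supportTails p.2 q.2 n := by
  simp only [mem_supportTails, ← List.map_cons, isChain_tensorProd_iff, ← getLastD_map,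
    length_map, Prod.ext_iff]
  tauto

def supportTailsTensorProdEquiv (p q : V × W) (n : ℕ) :
    (G.tensorProd H).supportTails p q n ≃
      G.supportTails p.1 q.1 n × H.supportTails p.2 q.2 n where
  toFun l :=
    (⟨_, (mem_supportTails_tensorProd.1 l.2).1⟩, ⟨_, (mem_supportTails_tensorProd.1 l.2).2⟩)
  invFun ls := ⟨ls.1.1.zip ls.2.1, by
    have hlen : ls.1.1.length = ls.2.1.length :=
      (mem_supportTails.1 ls.1.2).2.2.trans (mem_supportTails.1 ls.2.2).2.2.symm
    rw [mem_supportTails_tensorProd, map_fst_zip hlen.le, map_snd_zip hlen.ge]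
    exact ⟨ls.1.2, ls.2.2⟩⟩
  left_inv l := Subtype.ext (zip_of_prod rfl rfl).symm
  right_inv ls := by
    have hlen : ls.1.1.length = ls.2.1.length :=
      (mem_supportTails.1 ls.1.2).2.2.trans (mem_supportTails.1 ls.2.2).2.2.symm
    ext <;> simp [map_fst_zip hlen.le, map_snd_zip hlen.ge]

lemma Embedding.exists_map_eq_of_isChain (f : G ↪g H)
    (hf : ∀ v w, H.Adj (f v) w → w ∈ Set.range f) {u : V} {l : List W}
    (hl : (f u :: l).IsChain H.Adj) : ∃ l' : List V, l'.map f = l := by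
  induction l generalizing u with
  | nil => exact ⟨[], rfl⟩
  | cons w l ih =>
    rw [isChain_cons_cons] at hl
    obtain ⟨v, rfl⟩ := hf u w hl.1
    obtain ⟨l', rfl⟩ := ih hl.2
    exact ⟨v :: l', rfl⟩

lemma Embedding.map_mem_supportTails_iff (f : G ↪g H) {u v : V} {n : ℕ} {l : List V} :
    l.map f ∈ H.supportTails (f u) (f v) n ↔ l ∈ G.supportTails u v n := by
  simp only [mem_supportTails, isChain_cons_map, f.map_adj_iff, getLastD_map, f.injective.eq_iff,
    length_map]

noncomputable def Embedding.supportTailsEquiv (f : G ↪g H)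
    (hf : ∀ v w, H.Adj (f v) w → w ∈ Set.range f) (u v : V) (n : ℕ) :
    G.supportTails u v n ≃ H.supportTails (f u) (f v) n :=
  Equiv.ofBijective (fun l => ⟨l.1.map f, f.map_mem_supportTails_iff.2 l.2⟩)
    ⟨fun _ _ h => Subtype.ext (map_injective_iff.2 f.injective (congrArg Subtype.val h)), by
      rintro ⟨l, hl⟩
      obtain ⟨l', rfl⟩ := f.exists_map_eq_of_isChain hf (mem_supportTails.1 hl).1
      exact ⟨⟨l', f.map_mem_supportTails_iff.1 hl⟩, rfl⟩⟩

end SimpleGraph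

lemma latN_adj_iff {a b : ℕ} : latN.Adj a b ↔ b = a + 1 ∨ a = b + 1 := by
  change |(a : ℤ) - b| = 1 ↔ _
  rw [abs_eq zero_le_one]
  omega

namespace DyckStep

/-- At height `0` a step `D` leads to `0 - 1 = 0`, which is not adjacent to `0`: such lists fail
the chain condition of `isChain_heights_iff`. -/
def heights : ℕ → List DyckStep → List ℕ
  | _, [] => []
  | a, U :: d => (a + 1) :: heights (a + 1) d
  | a, D :: d => (a - 1) :: heights (a - 1) d

def ofHeights : ℕ → List ℕ → List DyckStep
  | _, [] => []
  | a, b :: l => (if b = a + 1 then U else D) :: ofHeights b l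

lemma length_heights : ∀ (a : ℕ) (d : List DyckStep), (heights a d).length = d.length
  | _, [] => rfl
  | a, U :: d => congrArg (· + 1) (length_heights (a + 1) d)
  | a, D :: d => congrArg (· + 1) (length_heights (a - 1) d)

lemma ofHeights_heights : ∀ (a : ℕ) (d : List DyckStep), ofHeights a (heights a d) = d
  | _, [] => rfl
  | a, U :: d => by simp [heights, ofHeights, ofHeights_heights]
  | a, D :: d => by simp [heights, ofHeights, ofHeights_heights]

lemma heights_ofHeights : ∀ (a : ℕ) (l : List ℕ), (a :: l).IsChain latN.Adj →
    heights a (ofHeights a l) = l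
  | _, [], _ => rfl
  | a, b :: l, h => by
    rw [isChain_cons_cons, latN_adj_iff] at h
    obtain ⟨rfl | rfl, h⟩ := h
    · simp [ofHeights, heights, heights_ofHeights _ l h]
    · rw [ofHeights, if_neg (by omega), heights, Nat.add_sub_cancel, heights_ofHeights _ l h]

lemma isChain_heights_iff : ∀ (a : ℕ) (d : List DyckStep),
    (a :: heights a d).IsChain latN.Adj ↔ ∀ i, (d.take i).count D ≤ a + (d.take i).count U
  | a, [] => by simp [heights]
  | a, U :: d => by
    rw [heights, isChain_cons_cons, isChain_heights_iff (a + 1) d]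
    conv_rhs => rw [← Nat.and_forall_add_one]
    simp only [latN_adj_iff, true_or, true_and, take_zero, take_succ_cons, count_nil, zero_le,
      count_cons_self, ne_eq, reduceCtorEq, not_false_eq_true, count_cons_of_ne]
    exact forall_congr' fun i => by omega
  | a, D :: d => by
    rw [heights, isChain_cons_cons, isChain_heights_iff (a - 1) d]
    conv_rhs => rw [← Nat.and_forall_add_one]
    simp only [latN_adj_iff, take_zero, take_succ_cons, count_nil, zero_le, count_cons_self, ne_eq,
      reduceCtorEq, not_false_eq_true, count_cons_of_ne, true_and]
    constructor
    · rintro ⟨ha, h⟩ i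
      have := h i
      omega
    · intro h
      have ha := h 0
      simp only [take_zero, count_nil] at ha
      exact ⟨by omega, fun i => by have := h i; omega⟩

lemma getLastD_heights_add_count_D : ∀ (a : ℕ) (d : List DyckStep),
    (a :: heights a d).IsChain latN.Adj → (heights a d).getLastD a + d.count D = a + d.count U
  | a, [], _ => by simp [heights]
  | a, U :: d, h => by
    rw [heights, isChain_cons_cons] at h
    have := getLastD_heights_add_count_D (a + 1) d h.2
    simp only [heights, getLastD_cons, count_cons, beq_iff_eq, reduceCtorEq, if_true, if_false]
    omega
  | a, D :: d, h => by
    rw [heights, isChain_cons_cons, latN_adj_iff] at h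
    have := getLastD_heights_add_count_D (a - 1) d h.2
    simp only [heights, getLastD_cons, count_cons, beq_iff_eq, reduceCtorEq, if_true, if_false]
    omega

lemma heights_mem_supportTails_iff {d : List DyckStep} {n : ℕ} :
    heights 0 d ∈ latN.supportTails 0 0 n ↔
      d.count U = d.count D ∧ (∀ i, (d.take i).count D ≤ (d.take i).count U) ∧
        d.length = n := by
  have hchain : (0 :: heights 0 d).IsChain latN.Adj ↔
      ∀ i, (d.take i).count D ≤ (d.take i).count U := by
    simpa using isChain_heights_iff 0 d
  have hlast (hprefix : ∀ i, (d.take i).count D ≤ (d.take i).count U) :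
      (heights 0 d).getLastD 0 = 0 ↔ d.count U = d.count D := by
    have := getLastD_heights_add_count_D 0 d (hchain.2 hprefix)
    omega
  rw [SimpleGraph.mem_supportTails, hchain, length_heights]
  constructor
  · rintro ⟨hprefix, hzero, hlen⟩
    exact ⟨(hlast hprefix).1 hzero, hprefix, hlen⟩
  · rintro ⟨hcount, hprefix, hlen⟩
    exact ⟨hprefix, (hlast hprefix).2 hcount, hlen⟩

end DyckStep

open DyckStep in
def latNSupportTailsEquivDyckWord (n : ℕ) :
    latN.supportTails 0 0 n ≃ {p : DyckWord // p.toList.length = n} where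
  toFun l :=
    have h := heights_mem_supportTails_iff.1 <| by
      rw [heights_ofHeights 0 l.1 (SimpleGraph.mem_supportTails.1 l.2).1]
      exact l.2
    ⟨⟨ofHeights 0 l.1, h.1, h.2.1⟩, h.2.2⟩
  invFun p := ⟨heights 0 p.1.toList,
    heights_mem_supportTails_iff.2 ⟨p.1.count_U_eq_count_D, p.1.count_D_le_count_U, p.2⟩⟩
  left_inv l := Subtype.ext (heights_ofHeights 0 l.1 (SimpleGraph.mem_supportTails.1 l.2).1)
  right_inv p := Subtype.ext (DyckWord.ext (ofHeights_heights 0 p.1.toList))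

lemma DyckWord.card_length_eq_two_mul (m : ℕ) :
    Nat.card {p : DyckWord // p.toList.length = 2 * m} = catalan m := by
  rw [← DyckWord.card_dyckWord_semilength_eq_catalan, ← Nat.card_eq_fintype_card]
  refine Nat.card_congr (Equiv.subtypeEquivRight fun p => ?_)
  rw [← p.two_mul_semilength_eq_length]
  omega

lemma DyckWord.card_length_eq_two_mul_add_one (m : ℕ) :
    Nat.card {p : DyckWord // p.toList.length = 2 * m + 1} = 0 := by
  have : IsEmpty {p : DyckWord // p.toList.length = 2 * m + 1} :=
    ⟨fun p => by have := p.1.two_mul_semilength_eq_length; omega⟩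
  exact Nat.card_of_isEmpty

lemma latZ_adj_iff {a b : ℤ} : latZ.Adj a b ↔ a = b + 1 ∨ b = a + 1 := by
  change |a - b| = 1 ↔ _
  rw [abs_eq zero_le_one]
  omega

abbrev wedge : Set (ℤ × ℤ) := {p | -p.1 ≤ p.2 ∧ p.2 ≤ p.1}

def wedgeEmbedding : (latZ □ latZ).induce wedge ↪g latN.tensorProd latN where
  toFun p := ((p.1.1 - p.1.2).toNat, (p.1.1 + p.1.2).toNat)
  inj' := by
    rintro ⟨⟨x, y⟩, hp⟩ ⟨⟨x', y'⟩, hq⟩ h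
    simp only [Set.mem_ofPred_eq, Prod.mk.injEq] at hp hq h
    ext <;> dsimp only <;> omega
  map_rel_iff' := by
    rintro ⟨⟨x, y⟩, hp⟩ ⟨⟨x', y'⟩, hq⟩
    simp only [Set.mem_ofPred_eq] at hp hq
    change latN.Adj (x - y).toNat (x' - y').toNat ∧ latN.Adj (x + y).toNat (x' + y').toNat ↔ _
    simp only [SimpleGraph.comap_adj, SimpleGraph.induce, Function.Embedding.coe_subtype,
      SimpleGraph.boxProd_adj, latZ_adj_iff, latN_adj_iff]
    omega

lemma mem_range_wedgeEmbedding_of_adj (p : wedge) (q : ℕ × ℕ)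
    (h : (latN.tensorProd latN).Adj (wedgeEmbedding p) q) : q ∈ Set.range wedgeEmbedding := by
  obtain ⟨⟨x, y⟩, hp⟩ := p
  obtain ⟨a, b⟩ := q
  change latN.Adj (x - y).toNat a ∧ latN.Adj (x + y).toNat b at h
  simp only [Set.mem_ofPred_eq, latN_adj_iff] at hp h
  -- the inverse rotation, exact because `a + b` has the parity of `(x - y) + (x + y) = 2 * x`
  refine ⟨⟨(((a : ℤ) + b) / 2, ((b : ℤ) - a) / 2), ?_⟩, ?_⟩
  · simp only [Set.mem_ofPred_eq]
    omega
  · change ((_ - _ : ℤ).toNat, (_ + _ : ℤ).toNat) = (a, b)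
    simp only [Prod.mk.injEq]
    omega

lemma walkCount_wedge (n : ℕ) :
    walkCount ((latZ □ latZ).induce wedge) ⟨(0, 0), by simp⟩ n =
      Nat.card {p : DyckWord // p.toList.length = n} ^ 2 := by
  rw [SimpleGraph.walkCount_eq_card_supportTails, sq, ← Nat.card_prod]
  exact Nat.card_congr <|
    (wedgeEmbedding.supportTailsEquiv mem_range_wedgeEmbedding_of_adj _ _ n).trans <|
      (SimpleGraph.supportTailsTensorProdEquiv _ _ n).trans <|
        (latNSupportTailsEquivDyckWord n).prodCongr (latNSupportTailsEquivDyckWord n)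

theorem walkCount_xgeygenegx (m : ℕ) :
    walkCount ((latZ □ latZ).induce {p : ℤ × ℤ | -p.1 ≤ p.2 ∧ p.2 ≤ p.1})
        ⟨(0, 0), by simp⟩ (2 * m) = catalan m ^ 2 ∧
      walkCount ((latZ □ latZ).induce {p : ℤ × ℤ | -p.1 ≤ p.2 ∧ p.2 ≤ p.1})
        ⟨(0, 0), by simp⟩ (2 * m + 1) = 0 := by
  rw [walkCount_wedge, walkCount_wedge, DyckWord.card_length_eq_two_mul,
    DyckWord.card_length_eq_two_mul_add_one]
  exact ⟨rfl, rfl⟩
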